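/- Suppose H ≤ PL₊(I) is generated by a finite set Z of nice generators. Let Y be the set of elements h ∈ Z whose orbital A_h is maximal (contained in no other orbital of an element of Z), and for h ∈ Y let P_h = {h' ∈ Z : A_{h'} ⊊ A_h}. Then H decomposes as the direct sum over h ∈ Y of the subgroups ⟨h, P_h⟩, and each ⟨h, P_h⟩ is isomorphic to the wreath product ⟨P_h⟩ ≀ ℤ, with ⟨h, P_h⟩ equal to the internal extension (⊕_{j∈ℤ} ⟨P_h⟩^{h^j}) ⋊ ⟨h⟩ inside H. -/

import Mathlib

open Set

namespace PLPaper

/-- We model `PL₊(I)` inside the group of bijections of `ℝ` with *opposite*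
composition, so that the group acts on `ℝ` on the right:
`x · (g * h) = (x · g) · h`. -/
abbrev PermR : Type := (Equiv.Perm ℝ)ᵐᵒᵖ

/-- The (right) action of `g` on the point `x`. -/
def ap (g : PermR) (x : ℝ) : ℝ := g.unop x

/-- `g` is affine on a neighbourhood of `x`. -/
def IsLocallyAffineAt (g : PermR) (x : ℝ) : Prop :=
  ∃ m b : ℝ, ∀ᶠ y in nhds x, ap g y = m * y + b

/-- The breakpoints of `g`: points of `(0,1)` where `g` is not locally affine
(equivalently, for a PL map, where the derivative fails to exist). -/
def Breakpoints (g : PermR) : Set ℝ :=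
  {x ∈ Ioo (0:ℝ) 1 | ¬ IsLocallyAffineAt g x}

/-- `g` is an orientation-preserving piecewise-linear homeomorphism of `[0,1]`
(extended by the identity to all of `ℝ`), with finitely many breakpoints. -/
def IsPL (g : PermR) : Prop :=
  StrictMono (ap g) ∧ (∀ x ∉ Ioo (0:ℝ) 1, ap g x = x) ∧ (Breakpoints g).Finite

/-- The support of `g`. -/
def Supp (g : PermR) : Set ℝ := {x | ap g x ≠ x}

/-- `(a,b)` is an orbital of `g`, i.e. a connected component of `Supp g`. -/
def IsOrbital (g : PermR) (a b : ℝ) : Prop :=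
  a < b ∧ Ioo a b ⊆ Supp g ∧ a ∉ Supp g ∧ b ∉ Supp g

/-- The support of a subgroup `G`. -/
def GSupp (G : Subgroup PermR) : Set ℝ := ⋃ g ∈ (G : Set PermR), Supp g

/-- `(a,b)` is an orbital of the group `G`, i.e. a connected component of its support. -/
def IsGroupOrbital (G : Subgroup PermR) (a b : ℝ) : Prop :=
  a < b ∧ Ioo a b ⊆ GSupp G ∧ a ∉ GSupp G ∧ b ∉ GSupp G

/-- The pair `g, h` carries a transition chain: orbitals `(a,b)` of `g` and
`(c,d)` of `h` with `a < c < b < d`. -/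
def ElemsTransitionChain (g h : PermR) : Prop :=
  ∃ a b c d : ℝ, IsOrbital g a b ∧ IsOrbital h c d ∧ a < c ∧ c < b ∧ b < d

/-- The pair `g, h` carries a one-sided overlap: orbitals `(a,b)` of `g` and
`(a,c)` of `h`, or `(a,b)` of `g` and `(c,b)` of `h`, where `a < c < b`. -/
def ElemsOneSidedOverlap (g h : PermR) : Prop :=
  ∃ a b c : ℝ, a < c ∧ c < b ∧
    ((IsOrbital g a b ∧ IsOrbital h a c) ∨ (IsOrbital g a b ∧ IsOrbital h c b))

def AdmitsTransitionChain (G : Subgroup PermR) : Prop :=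
  ∃ g ∈ G, ∃ h ∈ G, ElemsTransitionChain g h

def AdmitsOneSidedOverlap (G : Subgroup PermR) : Prop :=
  ∃ g ∈ G, ∃ h ∈ G, ElemsOneSidedOverlap g h

/-- `G` admits a bad overlap: orbitals `A` of `f ∈ G` and `B` of `g ∈ G` which
intersect, are distinct, and neither closure is contained in the other orbital. -/
def AdmitsBadOverlap (G : Subgroup PermR) : Prop :=
  ∃ f ∈ G, ∃ g ∈ G, ∃ a b c d : ℝ, IsOrbital f a b ∧ IsOrbital g c d ∧
    (Ioo a b ∩ Ioo c d).Nonempty ∧ Ioo a b ≠ Ioo c d ∧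
    ¬ Icc a b ⊆ Ioo c d ∧ ¬ Icc c d ⊆ Ioo a b

/-- A tower: a set of signed orbitals `((a,b), g)` with pairwise nested orbitals,
where equal orbitals force equal signatures. -/
def IsTower (T : Set ((ℝ × ℝ) × PermR)) : Prop :=
  (∀ p ∈ T, IsOrbital p.2 p.1.1 p.1.2) ∧
  (∀ p ∈ T, ∀ q ∈ T,
      Ioo p.1.1 p.1.2 ⊆ Ioo q.1.1 q.1.2 ∨ Ioo q.1.1 q.1.2 ⊆ Ioo p.1.1 p.1.2) ∧
  (∀ p ∈ T, ∀ q ∈ T, p.1 = q.1 → p.2 = q.2)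

/-- `G` admits the tower `T` if `T` is a tower all of whose signatures lie in `G`. -/
def AdmitsTower (G : Subgroup PermR) (T : Set ((ℝ × ℝ) × PermR)) : Prop :=
  IsTower T ∧ ∀ p ∈ T, p.2 ∈ G

def AdmitsInfiniteTower (G : Subgroup PermR) : Prop :=
  ∃ T : Set ((ℝ × ℝ) × PermR), AdmitsTower G T ∧ T.Infinite

/-- The set of breakpoints of the elements of a set `S`. -/
def BreakSet (S : Set PermR) : Set ℝ := ⋃ g ∈ S, Breakpoints g

/-- The derived length of a group: the least `n` with `derivedSeries G n = ⊥`. -/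
noncomputable def derivedLength (G : Type*) [Group G] : ℕ :=
  sInf {n : ℕ | derivedSeries G n = ⊥}

/-- `Z` is a set of nice generators:
(Z0) each `h ∈ Z` has exactly one orbital;
(Z1) no pair of elements of `Z` forms a transition chain or a one-sided overlap;
(Z2) distinct elements of `Z` have distinct orbitals;
(Z3) for each `h ∈ Z` there is `r ∈ A_h` such that every orbital of an element
of `Z` properly contained in `A_h` is contained in `(r, r·h)`. -/
def IsNiceSet (Z : Set PermR) : Prop :=
  (∀ h ∈ Z, (∃ a b : ℝ, IsOrbital h a b) ∧
    ∀ a b a' b' : ℝ, IsOrbital h a b → IsOrbital h a' b' → a = a' ∧ b = b') ∧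
  (∀ g ∈ Z, ∀ h ∈ Z, ¬ ElemsTransitionChain g h ∧ ¬ ElemsOneSidedOverlap g h) ∧
  (∀ g ∈ Z, ∀ h ∈ Z, g ≠ h → ∀ a b : ℝ, IsOrbital g a b → ¬ IsOrbital h a b) ∧
  (∀ h ∈ Z, ∀ a b : ℝ, IsOrbital h a b → ∃ r ∈ Ioo a b,
    ∀ h' ∈ Z, ∀ a' b' : ℝ, IsOrbital h' a' b' → Ioo a' b' ⊂ Ioo a b →
      Ioo a' b' ⊆ Ioo r (ap h r))

/-- The conjugate subgroup `K^g = g⁻¹ K g`. -/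
def ConjSG (K : Subgroup PermR) (g : PermR) : Subgroup PermR :=
  K.map (MulAut.conj g⁻¹).toMonoidHom

/-- The elements of `Z` whose (unique) orbital is maximal among orbitals of
elements of `Z`. -/
def YSet (Z : Set PermR) : Set PermR :=
  {h | h ∈ Z ∧ ∀ a b : ℝ, IsOrbital h a b → ∀ h' ∈ Z, ∀ a' b' : ℝ,
    IsOrbital h' a' b' → ¬ (Ioo a b ⊂ Ioo a' b')}

/-- `P_h`: the elements of `Z` whose orbital is properly contained in the orbital of `h`. -/
def PSet (Z : Set PermR) (h : PermR) : Set PermR :=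
  {h' | h' ∈ Z ∧ ∃ a b a' b' : ℝ, IsOrbital h a b ∧ IsOrbital h' a' b' ∧
    Ioo a' b' ⊂ Ioo a b}

/-- `⟨P_h⟩`. -/
def KSub (Z : Set PermR) (h : PermR) : Subgroup PermR := Subgroup.closure (PSet Z h)

/-- `⟨h, P_h⟩`. -/
def WSub (Z : Set PermR) (h : PermR) : Subgroup PermR :=
  Subgroup.closure ({h} ∪ PSet Z h)

/-- `⊕_{j ∈ ℤ} ⟨P_h⟩^{h^j}` (as an internal supremum of conjugate subgroups). -/
def NSub (Z : Set PermR) (h : PermR) : Subgroup PermR :=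
  ⨆ j : ℤ, ConjSG (KSub Z h) (h ^ j)

/-!
The orbital of an element of a nice generating set is its whole support, so (Z1) makes the
supports of the generators nested or disjoint, and the maximal ones, those of the elements of `Y`,
pairwise disjoint. Elements with disjoint supports commute, and subgroups supported on disjoint
sets meet trivially; this gives the direct sum decomposition. By (Z3), `⟨P_h⟩` is supported in the
fundamental domain `(r, r·h)` of `h`, so its conjugates by the powers `h^j` are supported in the
pairwise disjoint translates `(r·h^j, r·h^{j+1})`. All of them fix `r`, which no nontrivial power
of `h` does.
-/

lemma ap_mul (g h : PermR) (x : ℝ) : ap (g * h) x = ap h (ap g x) := rfl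

@[simp]
lemma ap_one (x : ℝ) : ap 1 x = x := rfl

lemma ap_inv_ap (g : PermR) (x : ℝ) : ap g⁻¹ (ap g x) = x := g.unop.symm_apply_apply x

lemma ap_ap_inv (g : PermR) (x : ℝ) : ap g (ap g⁻¹ x) = x := g.unop.apply_symm_apply x

lemma ap_injective (g : PermR) : Function.Injective (ap g) := g.unop.injective

lemma eq_one_of_forall_ap_eq {g : PermR} (h : ∀ x, ap g x = x) : g = 1 :=
  MulOpposite.unop_injective (Equiv.ext h)

lemma ap_zpow_add_one (g : PermR) (j : ℤ) (x : ℝ) : ap (g ^ (j + 1)) x = ap (g ^ j) (ap g x) := by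
  rw [add_comm, zpow_one_add, ap_mul]

lemma continuous_ap {g : PermR} (hg : StrictMono (ap g)) : Continuous (ap g) :=
  (hg.orderIsoOfSurjective (ap g) g.unop.surjective).continuous

def strictMonoSubgroup : Subgroup PermR where
  carrier := {g | StrictMono (ap g)}
  one_mem' := strictMono_id
  mul_mem' := fun ha hb => hb.comp ha
  inv_mem' := fun {g} hg _ _ hxy => hg.lt_iff_lt.1 (by rwa [ap_ap_inv, ap_ap_inv])

lemma strictMono_ap_zpow {g : PermR} (hg : StrictMono (ap g)) (n : ℤ) :
    StrictMono (ap (g ^ n)) :=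
  zpow_mem (show g ∈ strictMonoSubgroup from hg) n

lemma strictMono_ap_zpow_apply {g : PermR} (hg : StrictMono (ap g)) {r : ℝ} (hr : r < ap g r) :
    StrictMono fun n : ℤ => ap (g ^ n) r :=
  strictMono_int_of_lt_succ fun n => by
    simpa only [ap_zpow_add_one] using strictMono_ap_zpow hg n hr

lemma injective_ap_zpow_apply {g : PermR} (hg : StrictMono (ap g)) {r : ℝ} (hr : ap g r ≠ r) :
    Function.Injective fun n : ℤ => ap (g ^ n) r := by
  rcases hr.lt_or_gt with hr | hr
  · refine (strictAnti_int_of_succ_lt fun n => ?_).injective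
    simpa only [ap_zpow_add_one] using strictMono_ap_zpow hg n hr
  · exact (strictMono_ap_zpow_apply hg hr).injective

lemma eq_zero_of_zpow_eq_one {g : PermR} (hg : StrictMono (ap g)) {r : ℝ} (hr : ap g r ≠ r)
    {n : ℤ} (hn : g ^ n = 1) : n = 0 :=
  injective_ap_zpow_apply hg hr (by simp only [hn, zpow_zero])

lemma supp_one : Supp 1 = ∅ := by simp [Supp]

lemma supp_inv (g : PermR) : Supp g⁻¹ = Supp g := by
  ext x
  change ¬ ap g⁻¹ x = x ↔ ¬ ap g x = x
  rw [← (ap_injective g).eq_iff, ap_ap_inv, eq_comm]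

lemma supp_mul_subset (g h : PermR) : Supp (g * h) ⊆ Supp g ∪ Supp h := by
  intro x hx
  by_contra hc
  rw [mem_union, not_or] at hc
  exact hx (by rw [ap_mul, of_not_not hc.1, of_not_not hc.2])

lemma ap_mem_supp {g : PermR} {x : ℝ} (hx : x ∈ Supp g) : ap g x ∈ Supp g :=
  fun h => hx (ap_injective g h)

lemma supp_conj (c k : PermR) : Supp (c⁻¹ * k * c) = ap c⁻¹ ⁻¹' Supp k := by
  ext x
  obtain ⟨y, rfl⟩ : ∃ y, x = ap c y := ⟨ap c⁻¹ x, (ap_ap_inv c x).symm⟩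
  simp [Supp, ap_mul, ap_inv_ap, (ap_injective c).ne_iff]

lemma preimage_ap_inv_Ioo {c : PermR} (hc : StrictMono (ap c)) (r s : ℝ) :
    ap c⁻¹ ⁻¹' Ioo r s = Ioo (ap c r) (ap c s) := by
  ext x
  change r < ap c⁻¹ x ∧ ap c⁻¹ x < s ↔ ap c r < x ∧ x < ap c s
  rw [← hc.lt_iff_lt (a := r), ← hc.lt_iff_lt (b := s), ap_ap_inv]

def SuppSub (S : Set ℝ) : Subgroup PermR where
  carrier := {g | Supp g ⊆ S}
  one_mem' := by simp [supp_one]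
  mul_mem' := fun {a b} ha hb => (supp_mul_subset a b).trans (union_subset ha hb)
  inv_mem' := fun {a} ha => by simpa [supp_inv] using ha

lemma mem_suppSub {S : Set ℝ} {g : PermR} : g ∈ SuppSub S ↔ Supp g ⊆ S := Iff.rfl

lemma suppSub_mono {S T : Set ℝ} (h : S ⊆ T) : SuppSub S ≤ SuppSub T :=
  fun _ hg => (mem_suppSub.1 hg).trans h

lemma disjoint_suppSub {S T : Set ℝ} (hST : Disjoint S T) : Disjoint (SuppSub S) (SuppSub T) := by
  refine Subgroup.disjoint_def.2 fun {g} hS hT => eq_one_of_forall_ap_eq fun x => ?_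
  by_contra hx
  exact hST.notMem_of_mem_left (mem_suppSub.1 hS hx) (mem_suppSub.1 hT hx)

lemma iSup_le_suppSub {ι : Type*} {t : Set ι} {K : ι → Subgroup PermR} {U : ι → Set ℝ}
    (hK : ∀ i ∈ t, K i ≤ SuppSub (U i)) : ⨆ i ∈ t, K i ≤ SuppSub (⋃ i ∈ t, U i) :=
  iSup₂_le fun i hi => (hK i hi).trans (suppSub_mono (subset_biUnion_of_mem hi))

lemma disjoint_biSup_of_le_suppSub {ι : Type*} {t : Set ι} {K : ι → Subgroup PermR}
    {U : ι → Set ℝ} {L : Subgroup PermR} {S : Set ℝ} (hL : L ≤ SuppSub S)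
    (hK : ∀ i ∈ t, K i ≤ SuppSub (U i)) (hd : ∀ i ∈ t, Disjoint S (U i)) :
    Disjoint L (⨆ i ∈ t, K i) :=
  (disjoint_suppSub (disjoint_iUnion₂_right.2 hd)).mono hL (iSup_le_suppSub hK)

lemma commute_of_disjoint_supp {g h : PermR} (hd : Disjoint (Supp g) (Supp h)) :
    Commute g h := by
  refine MulOpposite.unop_injective (Equiv.ext fun x => ?_)
  change ap h (ap g x) = ap g (ap h x)
  by_cases hxg : x ∈ Supp g
  · rw [of_not_not (hd.notMem_of_mem_left hxg),
      of_not_not (hd.notMem_of_mem_left (ap_mem_supp hxg))]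
  · by_cases hxh : x ∈ Supp h
    · rw [of_not_not hxg, of_not_not (hd.notMem_of_mem_right (ap_mem_supp hxh))]
    · rw [of_not_not hxg, of_not_not hxh, of_not_not hxg]

lemma commute_of_mem_suppSub {S T : Set ℝ} (hST : Disjoint S T) {g h : PermR}
    (hg : g ∈ SuppSub S) (hh : h ∈ SuppSub T) : Commute g h :=
  commute_of_disjoint_supp (hST.mono hg hh)

lemma mem_conjSG {K : Subgroup PermR} {c x : PermR} :
    x ∈ ConjSG K c ↔ ∃ k ∈ K, c⁻¹ * k * c = x := by
  simp [ConjSG, Subgroup.mem_map]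

lemma conjSG_conjSG (K : Subgroup PermR) (x y : PermR) :
    ConjSG (ConjSG K x) y = ConjSG K (x * y) := by
  ext g
  simp only [mem_conjSG]
  constructor
  · rintro ⟨_, ⟨k, hk, rfl⟩, rfl⟩
    exact ⟨k, hk, by group⟩
  · rintro ⟨k, hk, rfl⟩
    exact ⟨_, ⟨k, hk, rfl⟩, by group⟩

lemma conjSG_le_suppSub {K : Subgroup PermR} {S : Set ℝ} (hK : K ≤ SuppSub S) (c : PermR) :
    ConjSG K c ≤ SuppSub (ap c⁻¹ ⁻¹' S) := by
  intro x hx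
  obtain ⟨k, hk, rfl⟩ := mem_conjSG.1 hx
  rw [mem_suppSub, supp_conj]
  exact preimage_mono (hK hk)

lemma conjSG_le_of_mem {K W : Subgroup PermR} {c : PermR} (hK : K ≤ W) (hc : c ∈ W) :
    ConjSG K c ≤ W := by
  intro x hx
  obtain ⟨k, hk, rfl⟩ := mem_conjSG.1 hx
  exact mul_mem (mul_mem (inv_mem hc) (hK hk)) hc

lemma conjSG_iSup_conjSG_zpow (K : Subgroup PermR) (h : PermR) :
    ConjSG (⨆ j : ℤ, ConjSG K (h ^ j)) h = ⨆ j : ℤ, ConjSG K (h ^ j) := by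
  rw [ConjSG, Subgroup.map_iSup]
  change ⨆ j : ℤ, ConjSG (ConjSG K (h ^ j)) h = _
  simp only [conjSG_conjSG, ← zpow_add_one]
  exact (Equiv.addRight (1 : ℤ)).iSup_congr fun _ => rfl

lemma closure_insert_eq_iSup_conjSG_zpow_sup_zpowers (h : PermR) (S : Set PermR) :
    Subgroup.closure ({h} ∪ S) =
      (⨆ j : ℤ, ConjSG (Subgroup.closure S) (h ^ j)) ⊔ Subgroup.zpowers h := by
  have hh : h ∈ Subgroup.closure ({h} ∪ S) :=
    Subgroup.subset_closure (mem_union_left _ (mem_singleton h))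
  apply le_antisymm
  · refine (Subgroup.closure_le _).2 (union_subset ?_ fun g hg => ?_)
    · exact singleton_subset_iff.2 (Subgroup.mem_sup_right (Subgroup.mem_zpowers h))
    · refine Subgroup.mem_sup_left (Subgroup.mem_iSup_of_mem 0 ?_)
      exact mem_conjSG.2 ⟨g, Subgroup.subset_closure hg, by simp⟩
  · refine sup_le (iSup_le fun j => conjSG_le_of_mem ?_ ?_) ?_
    · exact Subgroup.closure_mono subset_union_right
    · exact zpow_mem hh j
    · rw [Subgroup.zpowers_eq_closure]
      exact Subgroup.closure_mono subset_union_left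

section Blocks

open scoped Function

variable {h : PermR} (hh : StrictMono (ap h)) (r : ℝ)

def block (h : PermR) (r : ℝ) (j : ℤ) : Set ℝ := Ioo (ap (h ^ j) r) (ap (h ^ (j + 1)) r)

include hh

lemma block_eq_empty (hr : ap h r ≤ r) (j : ℤ) : block h r j = ∅ := by
  rw [block, ap_zpow_add_one]
  exact Ioo_eq_empty ((strictMono_ap_zpow hh j).monotone hr).not_gt

lemma pairwise_disjoint_block : Pairwise (Disjoint on block h r) := by
  rcases lt_or_ge r (ap h r) with hr | hr
  · have hdisj := (strictMono_ap_zpow_apply hh hr).monotone.pairwise_disjoint_on_Ioo_succ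
    simp only [Order.succ_eq_add_one] at hdisj
    exact hdisj
  · intro i j _
    simp [Function.onFun, block_eq_empty hh r hr]

lemma notMem_iUnion_block : r ∉ ⋃ j, block h r j := by
  rcases lt_or_ge r (ap h r) with hr | hr
  · have hmono := strictMono_ap_zpow_apply hh hr
    rintro ⟨_, ⟨j, rfl⟩, hj⟩
    have h₁ : j < 0 := hmono.lt_iff_lt.1 (by simpa using hj.1)
    have h₂ : 0 < j + 1 := hmono.lt_iff_lt.1 (by simpa using hj.2)
    omega
  · simp [block_eq_empty hh r hr]

end Blocks

section Wreath

variable {h : PermR} (hh : StrictMono (ap h)) {r : ℝ} {K : Subgroup PermR}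
  (hK : K ≤ SuppSub (Ioo r (ap h r)))
include hh hK

lemma conjSG_zpow_le_suppSub_block (j : ℤ) : ConjSG K (h ^ j) ≤ SuppSub (block h r j) := by
  have hblock : ap (h ^ j)⁻¹ ⁻¹' Ioo r (ap h r) = block h r j := by
    rw [preimage_ap_inv_Ioo (strictMono_ap_zpow hh j), block, ap_zpow_add_one]
  exact hblock ▸ conjSG_le_suppSub hK _

lemma commute_of_mem_conjSG_zpow {i j : ℤ} (hij : i ≠ j) {x y : PermR}
    (hx : x ∈ ConjSG K (h ^ i)) (hy : y ∈ ConjSG K (h ^ j)) : Commute x y :=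
  commute_of_mem_suppSub (pairwise_disjoint_block hh r hij)
    (conjSG_zpow_le_suppSub_block hh hK i hx) (conjSG_zpow_le_suppSub_block hh hK j hy)

lemma disjoint_conjSG_zpow_iSup (j : ℤ) :
    Disjoint (ConjSG K (h ^ j)) (⨆ i ∈ {i : ℤ | i ≠ j}, ConjSG K (h ^ i)) :=
  disjoint_biSup_of_le_suppSub (conjSG_zpow_le_suppSub_block hh hK j)
    (fun i _ => conjSG_zpow_le_suppSub_block hh hK i)
    (fun _ hi => pairwise_disjoint_block hh r (Ne.symm hi))

lemma disjoint_iSup_conjSG_zpow_zpowers (hr : ap h r ≠ r) :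
    Disjoint (⨆ j : ℤ, ConjSG K (h ^ j)) (Subgroup.zpowers h) := by
  refine Subgroup.disjoint_def.2 fun {x} hx ⟨n, hn⟩ => ?_
  subst hn
  have hle : ⨆ j : ℤ, ConjSG K (h ^ j) ≤ SuppSub (⋃ j, block h r j) :=
    iSup_le fun j => (conjSG_zpow_le_suppSub_block hh hK j).trans
      (suppSub_mono (subset_iUnion _ j))
  have hfix : ap (h ^ n) r = r :=
    of_not_not fun hmove => notMem_iUnion_block hh r (mem_suppSub.1 (hle hx) hmove)
  have hn : n = 0 := injective_ap_zpow_apply hh hr (by simpa using hfix)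
  simp [hn]

end Wreath

-- The orbital through `x` runs between the nearest fixed points on either side, which exist
-- because the fixed-point set is closed and contains `0` and `1`.
lemma exists_isOrbital_mem {g : PermR} (hg : IsPL g) {x : ℝ} (hx : x ∈ Supp g) :
    ∃ a b, IsOrbital g a b ∧ x ∈ Ioo a b := by
  set F := {y : ℝ | ap g y = y}
  have hF : IsClosed F := isClosed_eq (continuous_ap hg.1) continuous_id
  have hx01 : x ∈ Ioo (0 : ℝ) 1 := by_contra fun h => hx (hg.2.1 x h)
  have hlo : (F ∩ Iic x).Nonempty := ⟨0, hg.2.1 0 (by simp), hx01.1.le⟩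
  have hhi : (F ∩ Ici x).Nonempty := ⟨1, hg.2.1 1 (by simp), hx01.2.le⟩
  have hloB : BddAbove (F ∩ Iic x) := ⟨x, fun _ hy => hy.2⟩
  have hhiB : BddBelow (F ∩ Ici x) := ⟨x, fun _ hy => hy.2⟩
  have ha := (hF.inter isClosed_Iic).csSup_mem hlo hloB
  have hb := (hF.inter isClosed_Ici).csInf_mem hhi hhiB
  have hax : sSup (F ∩ Iic x) < x := ha.2.lt_of_ne fun h => hx (h ▸ ha.1)
  have hxb : x < sInf (F ∩ Ici x) := hb.2.lt_of_ne' fun h => hx (h ▸ hb.1)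
  refine ⟨_, _, ⟨hax.trans hxb, fun y hy hyF => ?_, fun h => h ha.1, fun h => h hb.1⟩, hax, hxb⟩
  rcases le_total y x with hyx | hxy
  · exact hy.1.not_ge (le_csSup hloB ⟨hyF, hyx⟩)
  · exact hy.2.not_ge (csInf_le hhiB ⟨hyF, hxy⟩)

lemma isOrbital_of_supp_eq {g : PermR} {a b : ℝ} (hab : a < b) (h : Supp g = Ioo a b) :
    IsOrbital g a b :=
  ⟨hab, h.ge, by simp [h], by simp [h]⟩

lemma Ioo_disjoint_or_subset_or_superset {α : Type*} [LinearOrder α] [DenselyOrdered α]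
    {a b c d : α} (h₁ : ¬ (a < c ∧ c < b ∧ b < d)) (h₂ : ¬ (c < a ∧ a < d ∧ d < b)) :
    Disjoint (Ioo a b) (Ioo c d) ∨ Ioo a b ⊆ Ioo c d ∨ Ioo c d ⊆ Ioo a b := by
  rcases le_or_gt c a with hca | hac
  · rcases le_or_gt b d with hbd | hdb
    · exact Or.inr (Or.inl (Ioo_subset_Ioo hca hbd))
    rcases hca.eq_or_lt with rfl | hca
    · exact Or.inr (Or.inr (Ioo_subset_Ioo le_rfl hdb.le))
    have hda : d ≤ a := le_of_not_gt fun had => h₂ ⟨hca, had, hdb⟩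
    exact Or.inl (Ioo_disjoint_Ioo.2 ((min_le_right _ _).trans (hda.trans (le_max_left _ _))))
  · rcases le_or_gt d b with hdb | hbd
    · exact Or.inr (Or.inr (Ioo_subset_Ioo hac.le hdb))
    have hbc : b ≤ c := le_of_not_gt fun hcb => h₁ ⟨hac, hcb, hbd⟩
    exact Or.inl (Ioo_disjoint_Ioo.2 ((min_le_left _ _).trans (hbc.trans (le_max_right _ _))))

lemma wSub_le_closure {Z : Set PermR} {h : PermR} (hh : h ∈ Z) : WSub Z h ≤ Subgroup.closure Z :=
  Subgroup.closure_mono (union_subset (singleton_subset_iff.2 hh) fun _ hg => hg.1)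

namespace IsNiceSet

variable {Z : Set PermR} (hZ : IsNiceSet Z) (hPL : ∀ g ∈ Z, IsPL g)
include hZ hPL

lemma supp_eq_Ioo {g : PermR} (hg : g ∈ Z) {a b : ℝ} (hab : IsOrbital g a b) :
    Supp g = Ioo a b := by
  refine Subset.antisymm (fun x hx => ?_) hab.2.1
  obtain ⟨c, d, hcd, hx⟩ := exists_isOrbital_mem (hPL g hg) hx
  obtain ⟨rfl, rfl⟩ := (hZ.1 g hg).2 c d a b hcd hab
  exact hx

lemma exists_isOrbital_supp_eq {g : PermR} (hg : g ∈ Z) :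
    ∃ a b, IsOrbital g a b ∧ Supp g = Ioo a b :=
  let ⟨a, b, hab⟩ := (hZ.1 g hg).1
  ⟨a, b, hab, hZ.supp_eq_Ioo hPL hg hab⟩

lemma supp_injOn : InjOn Supp Z := by
  intro g hg h hh hgh
  by_contra hne
  obtain ⟨a, b, hab, hsupp⟩ := hZ.exists_isOrbital_supp_eq hPL hg
  obtain ⟨-, -, hZ2, -⟩ := hZ
  exact hZ2 g hg h hh hne a b hab (isOrbital_of_supp_eq hab.1 (hgh ▸ hsupp))

lemma disjoint_or_subset_or_superset_supp {g h : PermR} (hg : g ∈ Z) (hh : h ∈ Z) :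
    Disjoint (Supp g) (Supp h) ∨ Supp g ⊆ Supp h ∨ Supp h ⊆ Supp g := by
  obtain ⟨a, b, hab, hg'⟩ := hZ.exists_isOrbital_supp_eq hPL hg
  obtain ⟨c, d, hcd, hh'⟩ := hZ.exists_isOrbital_supp_eq hPL hh
  obtain ⟨-, hZ1, -, -⟩ := hZ
  rw [hg', hh']
  exact Ioo_disjoint_or_subset_or_superset
    (fun ⟨h₁, h₂, h₃⟩ => (hZ1 g hg h hh).1 ⟨a, b, c, d, hab, hcd, h₁, h₂, h₃⟩)
    (fun ⟨h₁, h₂, h₃⟩ => (hZ1 h hh g hg).1 ⟨c, d, a, b, hcd, hab, h₁, h₂, h₃⟩)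

lemma mem_YSet_iff {h : PermR} : h ∈ YSet Z ↔ h ∈ Z ∧ ∀ h' ∈ Z, ¬ Supp h ⊂ Supp h' := by
  refine and_congr_right fun hh => ⟨fun hY h' hh' hss => ?_, fun hY a b hab h' hh' a' b' hab' => ?_⟩
  · obtain ⟨a, b, hab, hsupp⟩ := hZ.exists_isOrbital_supp_eq hPL hh
    obtain ⟨a', b', hab', hsupp'⟩ := hZ.exists_isOrbital_supp_eq hPL hh'
    exact hY a b hab h' hh' a' b' hab' (hsupp ▸ hsupp' ▸ hss)
  · rw [← hZ.supp_eq_Ioo hPL hh hab, ← hZ.supp_eq_Ioo hPL hh' hab']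
    exact hY h' hh'

lemma mem_PSet_iff {h h' : PermR} (hh : h ∈ Z) : h' ∈ PSet Z h ↔ h' ∈ Z ∧ Supp h' ⊂ Supp h := by
  refine and_congr_right fun hh' => ⟨fun ⟨a, b, a', b', hab, hab', hss⟩ => ?_, fun hss => ?_⟩
  · rwa [hZ.supp_eq_Ioo hPL hh hab, hZ.supp_eq_Ioo hPL hh' hab']
  · obtain ⟨a, b, hab, hsupp⟩ := hZ.exists_isOrbital_supp_eq hPL hh
    obtain ⟨a', b', hab', hsupp'⟩ := hZ.exists_isOrbital_supp_eq hPL hh'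
    exact ⟨a, b, a', b', hab, hab', hsupp ▸ hsupp' ▸ hss⟩

lemma pairwiseDisjoint_supp_YSet : (YSet Z).PairwiseDisjoint Supp := by
  intro h hh h' hh' hne
  have hY := (hZ.mem_YSet_iff hPL).1 hh
  have hY' := (hZ.mem_YSet_iff hPL).1 hh'
  have hsupp_ne : Supp h ≠ Supp h' := fun heq => hne (hZ.supp_injOn hPL hY.1 hY'.1 heq)
  rcases hZ.disjoint_or_subset_or_superset_supp hPL hY.1 hY'.1 with hd | hss | hss
  · exact hd
  · exact absurd (hss.ssubset_of_ne hsupp_ne) (hY.2 h' hY'.1)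
  · exact absurd (hss.ssubset_of_ne hsupp_ne.symm) (hY'.2 h hY.1)

lemma wSub_le_suppSub {h : PermR} (hh : h ∈ Z) : WSub Z h ≤ SuppSub (Supp h) := by
  refine (Subgroup.closure_le _).2 (union_subset ?_ fun g hg => ?_)
  · exact singleton_subset_iff.2 (mem_suppSub.2 subset_rfl)
  · exact ((hZ.mem_PSet_iff hPL hh).1 hg).2.subset

lemma exists_mem_YSet_mem_wSub (hfin : Z.Finite) {z : PermR} (hz : z ∈ Z) :
    ∃ m ∈ YSet Z, z ∈ WSub Z m := by
  obtain ⟨m, ⟨hm, hzm⟩, hmax⟩ := Finite.exists_maximalFor Supp {g ∈ Z | Supp z ⊆ Supp g}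
    (hfin.subset fun _ hg => hg.1) ⟨z, hz, subset_rfl⟩
  refine ⟨m, (hZ.mem_YSet_iff hPL).2 ⟨hm, fun h' hh' hss => ?_⟩, ?_⟩
  · exact hss.not_subset (hmax ⟨hh', hzm.trans hss.subset⟩ hss.subset)
  · by_cases hzm' : z = m
    · exact Subgroup.subset_closure (Or.inl hzm')
    · have hne : Supp z ≠ Supp m := fun heq => hzm' (hZ.supp_injOn hPL hz hm heq)
      exact Subgroup.subset_closure
        (Or.inr ((hZ.mem_PSet_iff hPL hm).2 ⟨hz, hzm.ssubset_of_ne hne⟩))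

lemma exists_kSub_le_suppSub_Ioo {h : PermR} (hh : h ∈ Z) :
    ∃ r, ap h r ≠ r ∧ KSub Z h ≤ SuppSub (Ioo r (ap h r)) := by
  obtain ⟨a, b, hab, hsupp⟩ := hZ.exists_isOrbital_supp_eq hPL hh
  obtain ⟨r, hr, hr_block⟩ := hZ.2.2.2 h hh a b hab
  refine ⟨r, hab.2.1 hr, (Subgroup.closure_le _).2 fun g hg => ?_⟩
  obtain ⟨hg, hss⟩ := (hZ.mem_PSet_iff hPL hh).1 hg
  obtain ⟨a', b', hab', hsupp'⟩ := hZ.exists_isOrbital_supp_eq hPL hg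
  rw [SetLike.mem_coe, mem_suppSub, hsupp']
  exact hr_block g hg a' b' hab' (hsupp ▸ hsupp' ▸ hss)

lemma closure_eq_iSup_wSub (hfin : Z.Finite) :
    Subgroup.closure Z = ⨆ h ∈ YSet Z, WSub Z h := by
  refine le_antisymm ((Subgroup.closure_le _).2 fun z hz => ?_)
    (iSup₂_le fun h hh => wSub_le_closure hh.1)
  obtain ⟨m, hm, hzm⟩ := hZ.exists_mem_YSet_mem_wSub hPL hfin hz
  exact le_iSup₂ (f := fun h _ => WSub Z h) m hm hzm

lemma commute_of_mem_wSub {h h' : PermR} (hh : h ∈ YSet Z) (hh' : h' ∈ YSet Z) (hne : h ≠ h')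
    {x y : PermR} (hx : x ∈ WSub Z h) (hy : y ∈ WSub Z h') : Commute x y :=
  commute_of_mem_suppSub (hZ.pairwiseDisjoint_supp_YSet hPL hh hh' hne)
    (hZ.wSub_le_suppSub hPL hh.1 hx) (hZ.wSub_le_suppSub hPL hh'.1 hy)

lemma disjoint_wSub_iSup_wSub {h : PermR} (hh : h ∈ YSet Z) :
    Disjoint (WSub Z h) (⨆ h' ∈ {g | g ∈ YSet Z ∧ g ≠ h}, WSub Z h') :=
  disjoint_biSup_of_le_suppSub (hZ.wSub_le_suppSub hPL hh.1)
    (fun _ hh' => hZ.wSub_le_suppSub hPL hh'.1.1)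
    (fun _ hh' => hZ.pairwiseDisjoint_supp_YSet hPL hh hh'.1 (Ne.symm hh'.2))

end IsNiceSet

theorem statement9 (Z : Set PermR) (hZfin : Z.Finite) (hZnice : IsNiceSet Z)
    (H : Subgroup PermR) (hH : H = Subgroup.closure Z)
    (hPL : ∀ g ∈ H, IsPL g) :
    -- `H` is the internal direct sum of the subgroups `⟨h, P_h⟩`, `h ∈ Y`:
    (H = ⨆ h ∈ YSet Z, WSub Z h) ∧
    (∀ h ∈ YSet Z, ∀ h' ∈ YSet Z, h ≠ h' →
      ∀ x ∈ WSub Z h, ∀ y ∈ WSub Z h', Commute x y) ∧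
    (∀ h ∈ YSet Z,
      Disjoint (WSub Z h) (⨆ h' ∈ {g | g ∈ YSet Z ∧ g ≠ h}, WSub Z h')) ∧
    -- each `⟨h, P_h⟩` is the internal wreath product `⟨P_h⟩ ≀ ℤ`, i.e. the
    -- internal extension `(⊕_{j ∈ ℤ} ⟨P_h⟩^{h^j}) ⋊ ⟨h⟩`:
    (∀ h ∈ YSet Z, ∀ n : ℤ, h ^ n = 1 → n = 0) ∧
    (∀ h ∈ YSet Z, ∀ i j : ℤ, i ≠ j →
      ∀ x ∈ ConjSG (KSub Z h) (h ^ i), ∀ y ∈ ConjSG (KSub Z h) (h ^ j),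
        Commute x y) ∧
    (∀ h ∈ YSet Z, ∀ j : ℤ,
      Disjoint (ConjSG (KSub Z h) (h ^ j))
        (⨆ i ∈ {i : ℤ | i ≠ j}, ConjSG (KSub Z h) (h ^ i))) ∧
    (∀ h ∈ YSet Z, ∀ j : ℤ,
      ConjSG (ConjSG (KSub Z h) (h ^ j)) h = ConjSG (KSub Z h) (h ^ (j + 1))) ∧
    (∀ h ∈ YSet Z, ConjSG (NSub Z h) h = NSub Z h) ∧
    (∀ h ∈ YSet Z, Disjoint (NSub Z h) (Subgroup.zpowers h)) ∧
    (∀ h ∈ YSet Z, WSub Z h = NSub Z h ⊔ Subgroup.zpowers h) := by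
  subst hH
  have hPLZ : ∀ g ∈ Z, IsPL g := fun g hg => hPL g (Subgroup.subset_closure hg)
  have hmono : ∀ h ∈ YSet Z, StrictMono (ap h) := fun h hh => (hPLZ h hh.1).1
  have hblocks : ∀ h ∈ YSet Z, ∃ r, ap h r ≠ r ∧ KSub Z h ≤ SuppSub (Ioo r (ap h r)) :=
    fun h hh => hZnice.exists_kSub_le_suppSub_Ioo hPLZ hh.1
  refine ⟨hZnice.closure_eq_iSup_wSub hPLZ hZfin,
    fun h hh h' hh' hne _ hx _ hy => hZnice.commute_of_mem_wSub hPLZ hh hh' hne hx hy,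
    fun h hh => hZnice.disjoint_wSub_iSup_wSub hPLZ hh, fun h hh n hn => ?_,
    fun h hh i j hij x hx y hy => ?_, fun h hh j => ?_,
    fun h _ j => by rw [conjSG_conjSG, ← zpow_add_one],
    fun h _ => conjSG_iSup_conjSG_zpow _ h, fun h hh => ?_,
    fun h _ => closure_insert_eq_iSup_conjSG_zpow_sup_zpowers h _⟩
  all_goals obtain ⟨r, hr, hK⟩ := hblocks h hh
  · exact eq_zero_of_zpow_eq_one (hmono h hh) hr hn
  · exact commute_of_mem_conjSG_zpow (hmono h hh) hK hij hx hy
  · exact disjoint_conjSG_zpow_iSup (hmono h hh) hK j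
  · exact disjoint_iSup_conjSG_zpow_zpowers (hmono h hh) hK hr

end PLPaper
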